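/- arXiv:2402.01747 — 7 statements merged into one kernel-verified Lean document; each statement's English description precedes it below -/
import Mathlib

section
/- Let V be a real Hilbert space, T > 0, a : V × V → ℝ a bilinear form with |a(u,v)| ≤ M‖u‖‖v‖, b : V × V → ℝ a bilinear form with b(v,v) ≥ m'‖v‖² for all v ∈ V, j : V × V → ℝ satisfying j(η₁,v₂) − j(η₁,v₁) + j(η₂,v₁) − j(η₂,v₂) ≤ α'‖η₁ − η₂‖‖v₁ − v₂‖ for all η₁, η₂, v₁, v₂ ∈ V with 0 ≤ α' < m', and F : [0,T] → V any function. If u ∈ C¹([0,T];V) satisfies, for every t ∈ [0,T] and every v ∈ V, a(u(t), v − u̇(t)) + b(u̇(t), v − u̇(t)) + j(u̇(t), v) − j(u̇(t), u̇(t)) ≥ ⟨F(t), v − u̇(t)⟩, then for all t₁, t₂ ∈ [0,T]: ‖u̇(t₁) − u̇(t₂)‖ ≤ c (‖u(t₁) − u(t₂)‖ + ‖F(t₁) − F(t₂)‖), where c = max{ M/(m' − α'), 1/(m' − α') }. -/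
open MeasureTheory Set
open scoped RealInnerProductSpace

/-- A priori estimate for solutions of the evolutionary variational inequality:
if `u ∈ C¹([0,T];V)` satisfies the variational inequality, with `a` bounded by `M`,
`b` coercive with constant `m'`, and `j` satisfying the four-term estimate with
constant `α'`, `0 ≤ α' < m'`, then
`‖u̇(t₁) − u̇(t₂)‖ ≤ c (‖u(t₁) − u(t₂)‖ + ‖F(t₁) − F(t₂)‖)` with
`c = max (M/(m'−α')) (1/(m'−α'))`. -/
theorem velocity_estimate_of_variational_inequality
    {V : Type*} [NormedAddCommGroup V] [InnerProductSpace ℝ V] [CompleteSpace V]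
    (T M m' α' : ℝ) (hT : 0 < T)
    (a b : V →ₗ[ℝ] V →ₗ[ℝ] ℝ) (j : V → V → ℝ) (F : ℝ → V) (u u' : ℝ → V)
    (hM : 0 < M) (ha : ∀ x y : V, |a x y| ≤ M * ‖x‖ * ‖y‖)
    (hbell : ∀ v : V, m' * ‖v‖ ^ 2 ≤ b v v)
    (hα' : 0 ≤ α') (hsmall : α' < m')
    (hj : ∀ η₁ η₂ v₁ v₂ : V,
      j η₁ v₂ - j η₁ v₁ + j η₂ v₁ - j η₂ v₂ ≤ α' * ‖η₁ - η₂‖ * ‖v₁ - v₂‖)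
    (hu : ∀ t ∈ Icc (0 : ℝ) T, HasDerivWithinAt u (u' t) (Icc (0 : ℝ) T) t)
    (hu' : ContinuousOn u' (Icc (0 : ℝ) T))
    (hVI : ∀ t ∈ Icc (0 : ℝ) T, ∀ v : V,
      a (u t) (v - u' t) + b (u' t) (v - u' t) + j (u' t) v - j (u' t) (u' t)
        ≥ ⟪F t, v - u' t⟫) :
    ∀ t₁ ∈ Icc (0 : ℝ) T, ∀ t₂ ∈ Icc (0 : ℝ) T,
      ‖u' t₁ - u' t₂‖ ≤
        max (M / (m' - α')) (1 / (m' - α')) * (‖u t₁ - u t₂‖ + ‖F t₁ - F t₂‖) := by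

  intro t₁ ht₁ t₂ ht₂
  have h1 := hVI t₁ ht₁ (u' t₂)
  have h2 := hVI t₂ ht₂ (u' t₁)
  set w : V := u' t₁ - u' t₂ with hw
  have hd : (0:ℝ) < m' - α' := by linarith
  -- key algebraic estimate
  have hbw : (m' - α') * ‖w‖ ^ 2 ≤ (M * ‖u t₁ - u t₂‖ + ‖F t₁ - F t₂‖) * ‖w‖ := by
    have hjw := hj (u' t₁) (u' t₂) (u' t₁) (u' t₂)
    have haw : |a (u t₂ - u t₁) w| ≤ M * ‖u t₂ - u t₁‖ * ‖w‖ := ha _ _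
    have hF : ⟪F t₁ - F t₂, w⟫ ≤ ‖F t₁ - F t₂‖ * ‖w‖ := by
      calc ⟪F t₁ - F t₂, w⟫ ≤ ‖⟪F t₁ - F t₂, w⟫‖ := le_abs_self _
        _ ≤ ‖F t₁ - F t₂‖ * ‖w‖ := norm_inner_le_norm _ _
    have hbcoer := hbell w
    have e1 : u' t₂ - u' t₁ = -w := by rw [hw]; abel
    rw [e1] at h1
    rw [← hw] at hjw
    have ea : a (u t₂ - u t₁) w = a (u t₂) w - a (u t₁) w := by
      simp [map_sub]
    have eb : b w w = b (u' t₁) w - b (u' t₂) w := by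
      simp [hw, map_sub]; ring
    have ean : a (u t₁) (-w) = - a (u t₁) w := by simp
    have ebn : b (u' t₁) (-w) = - b (u' t₁) w := by simp
    have eFn : ⟪F t₁, -w⟫ = - ⟪F t₁, w⟫ := by simp
    have eF2 : ⟪F t₂, w⟫ = ⟪F t₁, w⟫ - ⟪F t₁ - F t₂, w⟫ := by
      rw [inner_sub_left]; ring
    have habs : a (u t₂ - u t₁) w ≤ M * ‖u t₁ - u t₂‖ * ‖w‖ := by
      have : ‖u t₂ - u t₁‖ = ‖u t₁ - u t₂‖ := norm_sub_rev _ _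
      rw [this] at haw
      exact (abs_le.mp haw).2
    nlinarith [h1, h2, hjw, hbcoer, hF, habs]
  rcases eq_or_lt_of_le (norm_nonneg w) with h0 | h0
  · rw [← h0]
    have hc : 0 ≤ max (M / (m' - α')) (1 / (m' - α')) :=
      le_max_of_le_right (by positivity)
    have : 0 ≤ ‖u t₁ - u t₂‖ + ‖F t₁ - F t₂‖ := by positivity
    positivity
  · have hle : (m' - α') * ‖w‖ ≤ M * ‖u t₁ - u t₂‖ + ‖F t₁ - F t₂‖ := by
      nlinarith [hbw]
    have hM1 : M ≤ max (M / (m' - α')) (1 / (m' - α')) * (m' - α') := by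
      rw [ge_iff_le, ← div_le_iff₀ hd] at *
      exact le_max_left _ _
    have hM2 : 1 ≤ max (M / (m' - α')) (1 / (m' - α')) * (m' - α') := by
      rw [← div_le_iff₀ hd]
      exact le_max_right _ _
    have hnu : 0 ≤ ‖u t₁ - u t₂‖ := norm_nonneg _
    have hnF : 0 ≤ ‖F t₁ - F t₂‖ := norm_nonneg _
    nlinarith [hle, mul_le_mul_of_nonneg_right hM1 hnu, mul_le_mul_of_nonneg_right hM2 hnF]
end

section
/- Let V be a real Hilbert space, T > 0, a : V × V → ℝ a bilinear form with |a(u,v)| ≤ M‖u‖‖v‖, b : V × V → ℝ a bilinear form with b(v,v) ≥ m'‖v‖², and j : V × V → ℝ satisfying j(η₁,v₂) − j(η₁,v₁) + j(η₂,v₁) − j(η₂,v₂) ≤ α'‖η₁ − η₂‖‖v₁ − v₂‖ for all η₁, η₂, v₁, v₂ ∈ V, with 0 ≤ α' < m'. Let F : [0,T] → V and suppose u₁, u₂ ∈ C¹([0,T];V) both satisfy, for every t ∈ [0,T] and every v ∈ V, a(uᵢ(t), v − u̇ᵢ(t)) + b(u̇ᵢ(t), v − u̇ᵢ(t)) + j(u̇ᵢ(t),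 v) − j(u̇ᵢ(t), u̇ᵢ(t)) ≥ ⟨F(t), v − u̇ᵢ(t)⟩ (i = 1, 2), and u₁(0) = u₂(0). Then u₁(t) = u₂(t) for all t ∈ [0,T]. -/
open MeasureTheory Set
open scoped RealInnerProductSpace

/-- Uniqueness for the evolutionary variational inequality: two `C¹` solutions with
the same datum `F` and the same initial value coincide on `[0,T]`. -/
theorem uniqueness_of_variational_inequality_solutions
    {V : Type*} [NormedAddCommGroup V] [InnerProductSpace ℝ V] [CompleteSpace V]
    (T M m' α' : ℝ) (hT : 0 < T)
    (a b : V →ₗ[ℝ] V →ₗ[ℝ] ℝ) (j : V → V → ℝ) (F : ℝ → V)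
    (u₁ u₁' u₂ u₂' : ℝ → V)
    (hM : 0 < M) (ha : ∀ x y : V, |a x y| ≤ M * ‖x‖ * ‖y‖)
    (hbell : ∀ v : V, m' * ‖v‖ ^ 2 ≤ b v v)
    (hα' : 0 ≤ α') (hsmall : α' < m')
    (hj : ∀ η₁ η₂ v₁ v₂ : V,
      j η₁ v₂ - j η₁ v₁ + j η₂ v₁ - j η₂ v₂ ≤ α' * ‖η₁ - η₂‖ * ‖v₁ - v₂‖)
    (hu₁ : ∀ t ∈ Icc (0 : ℝ) T, HasDerivWithinAt u₁ (u₁' t) (Icc (0 : ℝ) T) t)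
    (hu₁' : ContinuousOn u₁' (Icc (0 : ℝ) T))
    (hu₂ : ∀ t ∈ Icc (0 : ℝ) T, HasDerivWithinAt u₂ (u₂' t) (Icc (0 : ℝ) T) t)
    (hu₂' : ContinuousOn u₂' (Icc (0 : ℝ) T))
    (hVI₁ : ∀ t ∈ Icc (0 : ℝ) T, ∀ v : V,
      a (u₁ t) (v - u₁' t) + b (u₁' t) (v - u₁' t) + j (u₁' t) v - j (u₁' t) (u₁' t)
        ≥ ⟪F t, v - u₁' t⟫)
    (hVI₂ : ∀ t ∈ Icc (0 : ℝ) T, ∀ v : V,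
      a (u₂ t) (v - u₂' t) + b (u₂' t) (v - u₂' t) + j (u₂' t) v - j (u₂' t) (u₂' t)
        ≥ ⟪F t, v - u₂' t⟫)
    (hinit : u₁ 0 = u₂ 0) :
    ∀ t ∈ Icc (0 : ℝ) T, u₁ t = u₂ t := by
  set K : ℝ := M / (m' - α') with hK
  have hm'α : 0 < m' - α' := by linarith
  have hK0 : 0 ≤ K := le_of_lt (div_pos hM hm'α)
  -- pointwise bound on the derivative of the difference
  have key : ∀ t ∈ Icc (0 : ℝ) T, ‖u₁' t - u₂' t‖ ≤ K * ‖u₁ t - u₂ t‖ := by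
    intro t ht
    set p := u₁' t
    set q := u₂' t
    set x := u₁ t
    set y := u₂ t
    have h1 := hVI₁ t ht q
    have h2 := hVI₂ t ht p
    have hsum : b (p - q) (p - q) ≤ -(a (x - y) (p - q))
        + (j p q - j p p + j q p - j q q) := by
      have e1 : (⟪F t, q - p⟫ : ℝ) + ⟪F t, p - q⟫ = 0 := by
        rw [inner_sub_right, inner_sub_right]; ring
      have e2 : a x (q - p) + a y (p - q) = -(a (x - y) (p - q)) := by
        simp [map_sub, LinearMap.sub_apply]; ring
      have e3 : b p (q - p) + b q (p - q) = -(b (p - q) (p - q)) := by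
        simp [map_sub, LinearMap.sub_apply]; ring
      nlinarith [h1, h2]
    have hjb : j p q - j p p + j q p - j q q ≤ α' * ‖p - q‖ * ‖p - q‖ :=
      hj p q p q
    have hab : -(a (x - y) (p - q)) ≤ M * ‖x - y‖ * ‖p - q‖ := by
      have := ha (x - y) (p - q)
      have := neg_abs_le (a (x - y) (p - q))
      linarith
    have hb := hbell (p - q)
    have hmain : (m' - α') * ‖p - q‖ ^ 2 ≤ M * ‖x - y‖ * ‖p - q‖ := by
      nlinarith [hsum, hjb, hab, hb]
    rcases eq_or_lt_of_le (norm_nonneg (p - q)) with h0 | h0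
    · rw [← h0]; positivity
    · rw [hK, div_mul_eq_mul_div, le_div_iff₀ hm'α]
      calc ‖p - q‖ * (m' - α') = (m' - α') * ‖p - q‖ ^ 2 / ‖p - q‖ := by
            field_simp
        _ ≤ M * ‖x - y‖ * ‖p - q‖ / ‖p - q‖ := by
            gcongr
        _ = M * ‖x - y‖ := by field_simp
  -- Gronwall
  have hwderiv : ∀ t ∈ Icc (0 : ℝ) T,
      HasDerivWithinAt (fun s => u₁ s - u₂ s) (u₁' t - u₂' t) (Icc (0 : ℝ) T) t :=
    fun t ht => (hu₁ t ht).sub (hu₂ t ht)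
  have hwcont : ContinuousOn (fun s => u₁ s - u₂ s) (Icc (0 : ℝ) T) :=
    fun t ht => (hwderiv t ht).continuousWithinAt
  have hgron := norm_le_gronwallBound_of_norm_deriv_right_le (f := fun s => u₁ s - u₂ s)
    (f' := fun s => u₁' s - u₂' s) (δ := 0) (K := K) (ε := 0) (a := 0) (b := T)
    hwcont
    (fun t ht => (hwderiv t (Ico_subset_Icc_self ht)).mono_of_mem_nhdsWithin
      (Icc_mem_nhdsGE_of_mem ht))
    (by simp [hinit])
    (fun t ht => by simpa using key t (Ico_subset_Icc_self ht))
  intro t ht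
  have := hgron t ht
  rw [gronwallBound_ε0_δ0] at this
  have : ‖u₁ t - u₂ t‖ ≤ 0 := this
  have := norm_nonneg (u₁ t - u₂ t)
  have hz : ‖u₁ t - u₂ t‖ = 0 := le_antisymm ‹_› ‹_›
  exact sub_eq_zero.mp (norm_eq_zero.mp hz)
end

section
/- Let V be a real Hilbert space, T > 0, a : V × V → ℝ a bilinear form with |a(u,v)| ≤ M‖u‖‖v‖, b : V × V → ℝ a bilinear form with b(v,v) ≥ m'‖v‖², and j : V × V → ℝ satisfying j(η₁,v₂) − j(η₁,v₁) + j(η₂,v₁) − j(η₂,v₂) ≤ α'‖η₁ − η₂‖‖v₁ − v₂‖ for all η₁, η₂, v₁, v₂ ∈ V, with 0 ≤ α' < m'. Let F : [0,T] → V be Lipschitz continuous. If u ∈ C¹([0,T];V) satisfies, for every t ∈ [0,T] and every v ∈ V, a(u(t), v − u̇(t)) + b(u̇(t), v − u̇(t)) + j(u̇(t), v) − j(u̇(t), u̇(t)) ≥ ⟨F(t), v − u̇(t)⟩, then the derivative u̇ : [0,T] → V is Lipschitz continuous on [0,T]. -/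
open MeasureTheory Set
open scoped RealInnerProductSpace

/-- If the datum `F` is Lipschitz continuous on `[0,T]` then the velocity `u̇` of any
`C¹` solution of the evolutionary variational inequality is Lipschitz continuous
on `[0,T]`. -/
theorem velocity_lipschitz_of_lipschitz_data
    {V : Type*} [NormedAddCommGroup V] [InnerProductSpace ℝ V] [CompleteSpace V]
    (T M m' α' L_F : ℝ) (hT : 0 < T)
    (a b : V →ₗ[ℝ] V →ₗ[ℝ] ℝ) (j : V → V → ℝ) (F : ℝ → V) (u u' : ℝ → V)
    (hM : 0 < M) (ha : ∀ x y : V, |a x y| ≤ M * ‖x‖ * ‖y‖)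
    (hbell : ∀ v : V, m' * ‖v‖ ^ 2 ≤ b v v)
    (hα' : 0 ≤ α') (hsmall : α' < m')
    (hj : ∀ η₁ η₂ v₁ v₂ : V,
      j η₁ v₂ - j η₁ v₁ + j η₂ v₁ - j η₂ v₂ ≤ α' * ‖η₁ - η₂‖ * ‖v₁ - v₂‖)
    (hLF : 0 ≤ L_F)
    (hF : ∀ t₁ ∈ Icc (0 : ℝ) T, ∀ t₂ ∈ Icc (0 : ℝ) T,
      ‖F t₁ - F t₂‖ ≤ L_F * |t₁ - t₂|)
    (hu : ∀ t ∈ Icc (0 : ℝ) T, HasDerivWithinAt u (u' t) (Icc (0 : ℝ) T) t)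
    (hu' : ContinuousOn u' (Icc (0 : ℝ) T))
    (hVI : ∀ t ∈ Icc (0 : ℝ) T, ∀ v : V,
      a (u t) (v - u' t) + b (u' t) (v - u' t) + j (u' t) v - j (u' t) (u' t)
        ≥ ⟪F t, v - u' t⟫) :
    ∃ L : ℝ, 0 ≤ L ∧ ∀ t₁ ∈ Icc (0 : ℝ) T, ∀ t₂ ∈ Icc (0 : ℝ) T,
      ‖u' t₁ - u' t₂‖ ≤ L * |t₁ - t₂| := by
  -- bound on ‖u'‖ on the compact interval
  obtain ⟨t₀, -, hCmax⟩ := (isCompact_Icc (a := (0:ℝ)) (b := T)).exists_isMaxOn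
    (nonempty_Icc.2 hT.le) (hu'.norm)
  have hC : ∀ x ∈ Icc (0:ℝ) T, ‖u' x‖ ≤ ‖u' t₀‖ := fun x hx => hCmax hx
  set C : ℝ := ‖u' t₀‖ with hCdef
  have hC0 : 0 ≤ C := norm_nonneg _
  -- mean value inequality : u is C-Lipschitz
  have hulip : ∀ t₁ ∈ Icc (0:ℝ) T, ∀ t₂ ∈ Icc (0:ℝ) T,
      ‖u t₁ - u t₂‖ ≤ C * |t₁ - t₂| := by
    intro t₁ h₁ t₂ h₂
    have := (convex_Icc (0:ℝ) T).norm_image_sub_le_of_norm_hasDerivWithin_le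
      hu (fun x hx => hC x hx) h₂ h₁
    simpa [Real.norm_eq_abs] using this
  refine ⟨(M * C + L_F) / (m' - α'), div_nonneg (by positivity) (by linarith), ?_⟩
  intro t₁ h₁ t₂ h₂
  set e : V := u' t₁ - u' t₂ with he
  by_cases hez : e = 0
  · rw [hez, norm_zero]
    have : (0:ℝ) ≤ (M * C + L_F) / (m' - α') * |t₁ - t₂| :=
      mul_nonneg (div_nonneg (by positivity) (by linarith)) (abs_nonneg _)
    linarith
  have hepos : 0 < ‖e‖ := norm_pos_iff.2 hez
  have h1 := hVI t₁ h₁ (u' t₂)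
  have h2 := hVI t₂ h₂ (u' t₁)
  have hbe : m' * ‖e‖ ^ 2 ≤ b e e := hbell e
  have hJ : j (u' t₁) (u' t₂) - j (u' t₁) (u' t₁)
      + j (u' t₂) (u' t₁) - j (u' t₂) (u' t₂) ≤ α' * ‖e‖ * ‖e‖ := by
    simpa [he] using hj (u' t₁) (u' t₂) (u' t₁) (u' t₂)
  have hae : a (u t₂ - u t₁) e ≤ M * (C * |t₂ - t₁|) * ‖e‖ := by
    calc a (u t₂ - u t₁) e ≤ |a (u t₂ - u t₁) e| := le_abs_self _
      _ ≤ M * ‖u t₂ - u t₁‖ * ‖e‖ := ha _ _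
      _ ≤ M * (C * |t₂ - t₁|) * ‖e‖ := by
          gcongr
          exact hulip t₂ h₂ t₁ h₁
  have hFe : ⟪F t₁ - F t₂, e⟫ ≤ L_F * |t₁ - t₂| * ‖e‖ := by
    calc ⟪F t₁ - F t₂, e⟫ ≤ ‖F t₁ - F t₂‖ * ‖e‖ := real_inner_le_norm _ _
      _ ≤ L_F * |t₁ - t₂| * ‖e‖ := by
          gcongr
          exact hF t₁ h₁ t₂ h₂
  -- expand the two VI inequalities
  have hsub1 : u' t₂ - u' t₁ = -e := by rw [he]; abel
  have hsub2 : u' t₁ - u' t₂ = e := he.symm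
  rw [hsub1] at h1
  rw [hsub2] at h2
  have hkey : b e e ≤ a (u t₂ - u t₁) e
      + (j (u' t₁) (u' t₂) - j (u' t₁) (u' t₁)
        + j (u' t₂) (u' t₁) - j (u' t₂) (u' t₂))
      + ⟪F t₁ - F t₂, e⟫ := by
    have e1 : a (u t₁) (-e) = - a (u t₁) e := by simp
    have e2 : b (u' t₁) (-e) = - b (u' t₁) e := by simp
    have e3 : ⟪F t₁, -e⟫ = - ⟪F t₁, e⟫ := by simp [inner_neg_right]
    have e4 : a (u t₂ - u t₁) e = a (u t₂) e - a (u t₁) e := by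
      simp [map_sub]
    have e5 : b (u' t₁) e - b (u' t₂) e = b e e := by
      rw [he]; simp [map_sub]; ring
    have e6 : ⟪F t₁ - F t₂, e⟫ = ⟪F t₁, e⟫ - ⟪F t₂, e⟫ := by
      simp [inner_sub_left]
    rw [e1, e2, e3] at h1
    rw [e4, e6, ← e5]
    linarith
  have habs : |t₂ - t₁| = |t₁ - t₂| := abs_sub_comm _ _
  rw [habs] at hae
  have hmain : (m' - α') * ‖e‖ ^ 2 ≤ (M * C + L_F) * |t₁ - t₂| * ‖e‖ := by
    nlinarith [hbe, hkey, hae, hFe, hJ]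
  have hdiv : ‖e‖ ≤ (M * C + L_F) / (m' - α') * |t₁ - t₂| := by
    rw [div_mul_eq_mul_div, le_div_iff₀ (by linarith : (0:ℝ) < m' - α')]
    nlinarith [hmain, hepos]
  simpa [he] using hdiv
end

section
/- Let V be a real Hilbert space, T > 0, a : V × V → ℝ a bilinear form with |a(u,v)| ≤ M‖u‖‖v‖, b : V × V → ℝ a bilinear form with b(v,v) ≥ m'‖v‖², and j : V × V → ℝ satisfying j(η₁,v₂) − j(η₁,v₁) + j(η₂,v₁) − j(η₂,v₂) ≤ α'‖η₁ − η₂‖‖v₁ − v₂‖ for all η₁, η₂, v₁, v₂ ∈ V, with 0 ≤ α' < m'. Let F : [0,T] → V and suppose u ∈ C¹([0,T];V) satisfies the variational inequality a(u(t), v − u̇(t)) + b(u̇(t), v − u̇(t)) + j(u̇(t), v) − j(u̇(t), u̇(t)) ≥ ⟨F(t), v − u̇(t)⟩ for every t ∈ [0,T] and v ∈ V. If at a point t ∈ (0,T) the function u̇ is differentiable with derivative ü(t) and F is differentiable with derivative Ḟ(t), then ‖ü(t)‖ ≤ c (‖u̇(t)‖ + ‖Ḟ(t)‖), where c = max{ M/(m'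 − α'), 1/(m' − α') }. -/
open MeasureTheory Set
open scoped RealInnerProductSpace

/-- Pointwise acceleration estimate: if `u ∈ C¹([0,T];V)` solves the evolutionary
variational inequality, and at a point `t ∈ (0,T)` the velocity `u̇` has derivative
`ü(t)` and `F` has derivative `Ḟ(t)`, then
`‖ü(t)‖ ≤ c (‖u̇(t)‖ + ‖Ḟ(t)‖)` with `c = max (M/(m'−α')) (1/(m'−α'))`. -/
theorem acceleration_estimate
    {V : Type*} [NormedAddCommGroup V] [InnerProductSpace ℝ V] [CompleteSpace V]
    (T M m' α' : ℝ) (hT : 0 < T)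
    (a b : V →ₗ[ℝ] V →ₗ[ℝ] ℝ) (j : V → V → ℝ) (F : ℝ → V) (u u' : ℝ → V)
    (hM : 0 < M) (ha : ∀ x y : V, |a x y| ≤ M * ‖x‖ * ‖y‖)
    (hbell : ∀ v : V, m' * ‖v‖ ^ 2 ≤ b v v)
    (hα' : 0 ≤ α') (hsmall : α' < m')
    (hj : ∀ η₁ η₂ v₁ v₂ : V,
      j η₁ v₂ - j η₁ v₁ + j η₂ v₁ - j η₂ v₂ ≤ α' * ‖η₁ - η₂‖ * ‖v₁ - v₂‖)
    (hu : ∀ t ∈ Icc (0 : ℝ) T, HasDerivWithinAt u (u' t) (Icc (0 : ℝ) T) t)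
    (hu' : ContinuousOn u' (Icc (0 : ℝ) T))
    (hVI : ∀ t ∈ Icc (0 : ℝ) T, ∀ v : V,
      a (u t) (v - u' t) + b (u' t) (v - u' t) + j (u' t) v - j (u' t) (u' t)
        ≥ ⟪F t, v - u' t⟫)
    (t : ℝ) (ht : t ∈ Ioo (0 : ℝ) T) (u'' F' : V)
    (hu'' : HasDerivAt u' u'' t) (hF' : HasDerivAt F F' t) :
    ‖u''‖ ≤ max (M / (m' - α')) (1 / (m' - α')) * (‖u' t‖ + ‖F'‖) := by
  set d : ℝ := m' - α' with hd
  have hdpos : 0 < d := sub_pos.mpr hsmall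
  have htmem : t ∈ Icc (0 : ℝ) T := Ioo_subset_Icc_self ht
  -- Key pointwise estimate
  have key : ∀ s ∈ Icc (0 : ℝ) T,
      d * ‖u' s - u' t‖ ≤ M * ‖u s - u t‖ + ‖F s - F t‖ := by
    intro s hs
    have h1 := hVI t htmem (u' s)
    have h2 := hVI s hs (u' t)
    have hjb := hj (u' t) (u' s) (u' t) (u' s)
    have hbb := hbell (u' s - u' t)
    have haa := le_of_abs_le (ha (u t - u s) (u' s - u' t))
    have hcs : ⟪F s - F t, u' s - u' t⟫ ≤ ‖F s - F t‖ * ‖u' s - u' t‖ :=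
      real_inner_le_norm _ _
    rw [norm_sub_rev (u' t) (u' s)] at hjb
    rw [norm_sub_rev (u t) (u s)] at haa
    simp only [map_sub, LinearMap.sub_apply, inner_sub_left, inner_sub_right] at h1 h2 hbb haa hcs
    rcases eq_or_lt_of_le (norm_nonneg (u' s - u' t)) with h0 | h0
    · rw [← h0]
      have : 0 ≤ M * ‖u s - u t‖ := by positivity
      nlinarith [norm_nonneg (F s - F t)]
    · nlinarith [norm_nonneg (u s - u t), norm_nonneg (F s - F t)]
  -- pass to the difference quotient
  have hIcc : Icc (0 : ℝ) T ∈ nhds t := Icc_mem_nhds ht.1 ht.2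
  have hut : HasDerivAt u (u' t) t := (hu t htmem).hasDerivAt hIcc
  have lu' : Filter.Tendsto (fun s => ‖slope u' t s‖) (nhdsWithin t {t}ᶜ) (nhds ‖u''‖) :=
    (hasDerivAt_iff_tendsto_slope.mp hu'').norm
  have lu : Filter.Tendsto (fun s => ‖slope u t s‖) (nhdsWithin t {t}ᶜ) (nhds ‖u' t‖) :=
    (hasDerivAt_iff_tendsto_slope.mp hut).norm
  have lF : Filter.Tendsto (fun s => ‖slope F t s‖) (nhdsWithin t {t}ᶜ) (nhds ‖F'‖) :=
    (hasDerivAt_iff_tendsto_slope.mp hF').norm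
  have L1 : Filter.Tendsto (fun s => d * ‖slope u' t s‖) (nhdsWithin t {t}ᶜ)
      (nhds (d * ‖u''‖)) := lu'.const_mul d
  have L2 : Filter.Tendsto (fun s => M * ‖slope u t s‖ + ‖slope F t s‖) (nhdsWithin t {t}ᶜ)
      (nhds (M * ‖u' t‖ + ‖F'‖)) := (lu.const_mul M).add lF
  have hev : ∀ᶠ s in nhdsWithin t {t}ᶜ,
      d * ‖slope u' t s‖ ≤ M * ‖slope u t s‖ + ‖slope F t s‖ := by
    filter_upwards [nhdsWithin_le_nhds hIcc, self_mem_nhdsWithin] with s hs hsne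
    have hsne' : s ≠ t := hsne
    have hk := key s hs
    have hslope : ∀ f : ℝ → V, ‖slope f t s‖ = |s - t|⁻¹ * ‖f s - f t‖ := by
      intro f
      rw [slope_def_module, norm_smul, norm_inv, Real.norm_eq_abs]
    rw [hslope u', hslope u, hslope F]
    have hpos : (0:ℝ) < |s - t|⁻¹ := by
      rw [inv_pos, abs_pos, sub_ne_zero]; exact hsne'
    calc d * (|s - t|⁻¹ * ‖u' s - u' t‖)
        = |s - t|⁻¹ * (d * ‖u' s - u' t‖) := by ring
      _ ≤ |s - t|⁻¹ * (M * ‖u s - u t‖ + ‖F s - F t‖) := by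
          exact mul_le_mul_of_nonneg_left hk hpos.le
      _ = M * (|s - t|⁻¹ * ‖u s - u t‖) + |s - t|⁻¹ * ‖F s - F t‖ := by ring
  have hlim : d * ‖u''‖ ≤ M * ‖u' t‖ + ‖F'‖ :=
    le_of_tendsto_of_tendsto L1 L2 hev
  -- conclude
  set c : ℝ := max (M / d) (1 / d) with hc
  have hc1 : M ≤ c * d := by
    have := le_max_left (M / d) (1 / d)
    calc M = M / d * d := by field_simp
      _ ≤ c * d := mul_le_mul_of_nonneg_right this hdpos.le
  have hc2 : 1 ≤ c * d := by
    have := le_max_right (M / d) (1 / d)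
    calc (1:ℝ) = 1 / d * d := by field_simp
      _ ≤ c * d := mul_le_mul_of_nonneg_right this hdpos.le
  have : d * ‖u''‖ ≤ d * (c * (‖u' t‖ + ‖F'‖)) := by
    nlinarith [norm_nonneg (u' t), norm_nonneg F', hlim]
  exact le_of_mul_le_mul_left this hdpos
end

section
/- Let (X, μ) be a measure space and r : X × ℝ → ℝ a function such that r(x,s) ≥ 0 for all (x,s), x ↦ r(x,s) is measurable for each s ∈ ℝ, x ↦ r(x,0) belongs to L²(μ), and there is L_r > 0 with |r(x,s₁) − r(x,s₂)| ≤ L_r|s₁ − s₂| for all x ∈ X and s₁, s₂ ∈ ℝ. For η, v ∈ L²(μ; ℝ) define j(η, v) = ∫_X r(x, |η(x)|) |v(x)| dμ(x). Then j(η, v) is finite for all η, v ∈ L²(μ; ℝ), and for all η₁, η₂, v₁, v₂ ∈ L²(μ; ℝ): j(η₁, v₂) − j(η₁, v₁) + j(η₂, v₁) − j(η₂, v₂) ≤ L_r ‖η₁ − η₂‖_{L²(μ)} ‖v₁ − v₂‖_{L²(μ)}. -/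
/-!
The four-term expression equals `∫ (r(x,|η₁|) - r(x,|η₂|)) (|v₂| - |v₁|) dμ`, whose integrand is
bounded pointwise by `L_r |η₁ - η₂| |v₁ - v₂|` (Lipschitz bound in `s` and the reverse triangle
inequality); Cauchy–Schwarz in `L²(μ)` finishes. Finiteness comes from the same Lipschitz bound:
`|r(x,s)| ≤ |r(x,0)| + L_r |s|` puts `r(·,|η|)` in `L²(μ)`, and measurability of `x ↦ r(x,|η x|)`
from `r` being Carathéodory (measurable in `x`, continuous in `s`).
-/

open MeasureTheory ENNReal

section

variable {X : Type*} [MeasurableSpace X] {μ : Measure X}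

lemma sub_mul_abs_sub_abs_le {ρ : ℝ → ℝ} {L : ℝ} (hL : 0 ≤ L)
    (hρ : ∀ s t, |ρ s - ρ t| ≤ L * |s - t|) (a b c d : ℝ) :
    (ρ (|a|) - ρ (|b|)) * (|d| - |c|) ≤ L * |a - b| * |c - d| := by
  have hρab : |ρ (|a|) - ρ (|b|)| ≤ L * |a - b| :=
    (hρ _ _).trans (mul_le_mul_of_nonneg_left (abs_abs_sub_abs_le_abs_sub a b) hL)
  have hcd : |(|d| - |c|)| ≤ |c - d| := by
    rw [abs_sub_comm c d]; exact abs_abs_sub_abs_le_abs_sub d c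
  calc (ρ (|a|) - ρ (|b|)) * (|d| - |c|) ≤ |ρ (|a|) - ρ (|b|)| * |(|d| - |c|)| := by
        rw [← abs_mul]; exact le_abs_self _
    _ ≤ L * |a - b| * |c - d| := mul_le_mul hρab hcd (abs_nonneg _) (by positivity)

lemma Lp.integral_abs_mul_abs_le {p q : ℝ≥0∞} [HolderTriple p q 1]
    (f : Lp ℝ p μ) (g : Lp ℝ q μ) :
    ∫ x, |f x| * |g x| ∂μ ≤ ‖f‖ * ‖g‖ := by
  have holder := eLpNorm_smul_le_mul_eLpNorm (p := p) (q := q) (r := 1)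
    (Lp.aestronglyMeasurable g) (Lp.aestronglyMeasurable f)
  calc ∫ x, |f x| * |g x| ∂μ = (eLpNorm (⇑f • ⇑g) 1 μ).toReal := by
        rw [eLpNorm_one_eq_lintegral_enorm, ← integral_norm_eq_lintegral_enorm
          ((Lp.aestronglyMeasurable f).smul (Lp.aestronglyMeasurable g))]
        simp
    _ ≤ (eLpNorm f p μ * eLpNorm g q μ).toReal := toReal_mono (by finiteness) holder
    _ = ‖f‖ * ‖g‖ := by rw [toReal_mul, Lp.norm_def, Lp.norm_def]

lemma aestronglyMeasurable_comp_of_continuous_of_measurable {r : X × ℝ → ℝ}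
    (hcont : ∀ x, Continuous fun s => r (x, s)) (hmeas : ∀ s, Measurable fun x => r (x, s))
    {f : X → ℝ} (hf : AEStronglyMeasurable f μ) :
    AEStronglyMeasurable (fun x => r (x, f x)) μ := by
  have hr : Measurable (Function.uncurry fun s x => r (x, s)) :=
    measurable_uncurry_of_continuous_of_measurable hcont hmeas
  refine (hr.comp (hf.measurable_mk.prodMk measurable_id)).aestronglyMeasurable.congr ?_
  filter_upwards [hf.ae_eq_mk] with x hx
  simp [hx]

section LipschitzInSecondVariable

variable {r : X × ℝ → ℝ} {L : ℝ} (hrmeas : ∀ s, Measurable fun x => r (x, s))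
  (hrlip : ∀ x s₁ s₂, |r (x, s₁) - r (x, s₂)| ≤ L * |s₁ - s₂|)
include hrmeas hrlip

lemma memLp_comp_of_lipschitz {p : ℝ≥0∞} (hr0 : MemLp (fun x => r (x, 0)) p μ) {f : X → ℝ}
    (hf : MemLp f p μ) : MemLp (fun x => r (x, f x)) p μ := by
  have hcont (x : X) : Continuous fun s => r (x, s) :=
    (LipschitzWith.of_dist_le' fun s₁ s₂ => hrlip x s₁ s₂).continuous
  have hmeas := aestronglyMeasurable_comp_of_continuous_of_measurable hcont hrmeas hf.1
  refine (hr0.norm.add (hf.norm.const_mul L)).of_le hmeas (ae_of_all _ fun x => ?_)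
  have growth : |r (x, f x)| ≤ |r (x, 0)| + L * |f x| := by
    have := (abs_sub_abs_le_abs_sub _ _).trans (hrlip x (f x) 0)
    rw [sub_zero] at this
    linarith
  simpa only [Real.norm_eq_abs, Pi.add_apply] using growth.trans (le_abs_self _)

lemma integrable_comp_abs_mul_abs {p q : ℝ≥0∞} [HolderTriple p q 1]
    (hr0 : MemLp (fun x => r (x, 0)) p μ) (η : Lp ℝ p μ) (v : Lp ℝ q μ) :
    Integrable (fun x => r (x, |η x|) * |v x|) μ :=
  (memLp_comp_of_lipschitz hrmeas hrlip hr0 (Lp.memLp η).abs).integrable_mul (Lp.memLp v).abs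

lemma integral_four_term_le_mul_norm_mul_norm {p q : ℝ≥0∞} [HolderTriple p q 1]
    (hL : 0 ≤ L) (hr0 : MemLp (fun x => r (x, 0)) p μ) (η₁ η₂ : Lp ℝ p μ) (v₁ v₂ : Lp ℝ q μ) :
    (∫ x, r (x, |η₁ x|) * |v₂ x| ∂μ) - (∫ x, r (x, |η₁ x|) * |v₁ x| ∂μ)
        + (∫ x, r (x, |η₂ x|) * |v₁ x| ∂μ) - (∫ x, r (x, |η₂ x|) * |v₂ x| ∂μ)
      ≤ L * ‖η₁ - η₂‖ * ‖v₁ - v₂‖ := by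
  have hint := integrable_comp_abs_mul_abs hrmeas hrlip hr0 (q := q)
  have h₁ := (hint η₁ v₂).sub' (hint η₁ v₁)
  have h₂ := h₁.fun_add (hint η₂ v₁)
  rw [← integral_sub (hint η₁ v₂) (hint η₁ v₁), ← integral_add h₁ (hint η₂ v₁),
    ← integral_sub h₂ (hint η₂ v₂)]
  have hdom : Integrable (fun x => L * (|(η₁ - η₂) x| * |(v₁ - v₂) x|)) μ :=
    ((Lp.memLp (η₁ - η₂)).abs.integrable_mul (Lp.memLp (v₁ - v₂)).abs).const_mul L
  calc _ ≤ ∫ x, L * (|(η₁ - η₂) x| * |(v₁ - v₂) x|) ∂μ := by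
        refine integral_mono_ae (h₂.sub' (hint η₂ v₂)) hdom ?_
        filter_upwards [Lp.coeFn_sub η₁ η₂, Lp.coeFn_sub v₁ v₂] with x hη hv
        have := sub_mul_abs_sub_abs_le hL (hrlip x) (η₁ x) (η₂ x) (v₁ x) (v₂ x)
        simp only [hη, hv, Pi.sub_apply]
        linarith
    _ = L * ∫ x, |(η₁ - η₂) x| * |(v₁ - v₂) x| ∂μ := integral_const_mul _ _
    _ ≤ L * (‖η₁ - η₂‖ * ‖v₁ - v₂‖) := by gcongr; exact Lp.integral_abs_mul_abs_le _ _
    _ = L * ‖η₁ - η₂‖ * ‖v₁ - v₂‖ := (mul_assoc _ _ _).symm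

end LipschitzInSecondVariable

end

theorem friction_functional_finite_and_four_term_estimate_general
    {X : Type*} [MeasurableSpace X] (μ : Measure X)
    (r : X × ℝ → ℝ) (L_r : ℝ)
    (hrmeas : ∀ s : ℝ, Measurable fun x => r (x, s))
    (hr02 : MemLp (fun x => r (x, 0)) 2 μ)
    (hLr : 0 < L_r)
    (hrlip : ∀ x s₁ s₂, |r (x, s₁) - r (x, s₂)| ≤ L_r * |s₁ - s₂|) :
    (∀ η v : Lp ℝ 2 μ, Integrable (fun x => r (x, |η x|) * |v x|) μ) ∧
    ∀ η₁ η₂ v₁ v₂ : Lp ℝ 2 μ,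
      (∫ x, r (x, |η₁ x|) * |v₂ x| ∂μ) - (∫ x, r (x, |η₁ x|) * |v₁ x| ∂μ)
        + (∫ x, r (x, |η₂ x|) * |v₁ x| ∂μ) - (∫ x, r (x, |η₂ x|) * |v₂ x| ∂μ)
      ≤ L_r * ‖η₁ - η₂‖ * ‖v₁ - v₂‖ :=
  ⟨integrable_comp_abs_mul_abs hrmeas hrlip hr02,
    integral_four_term_le_mul_norm_mul_norm hrmeas hrlip hLr.le hr02⟩

/-- The friction functional `j(η,v) = ∫ r(x,|η x|) |v x| dμ` is well defined (finite)
on `L²(μ) × L²(μ)` and satisfies the four-term Lipschitz-type estimate with constant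
`L_r`, provided the friction bound `r` is nonnegative, measurable in the first
variable, Lipschitz in the second variable with constant `L_r`, and `r(·,0) ∈ L²(μ)`. -/
theorem friction_functional_finite_and_four_term_estimate
    {X : Type*} [MeasurableSpace X] (μ : Measure X)
    (r : X × ℝ → ℝ) (L_r : ℝ)
    (hr0 : ∀ x s, 0 ≤ r (x, s))
    (hrmeas : ∀ s : ℝ, Measurable fun x => r (x, s))
    (hr02 : MemLp (fun x => r (x, 0)) 2 μ)
    (hLr : 0 < L_r)
    (hrlip : ∀ x s₁ s₂, |r (x, s₁) - r (x, s₂)| ≤ L_r * |s₁ - s₂|) :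
    (∀ η v : Lp ℝ 2 μ, Integrable (fun x => r (x, |η x|) * |v x|) μ) ∧
    ∀ η₁ η₂ v₁ v₂ : Lp ℝ 2 μ,
      (∫ x, r (x, |η₁ x|) * |v₂ x| ∂μ) - (∫ x, r (x, |η₁ x|) * |v₁ x| ∂μ)
        + (∫ x, r (x, |η₂ x|) * |v₁ x| ∂μ) - (∫ x, r (x, |η₂ x|) * |v₂ x| ∂μ)
      ≤ L_r * ‖η₁ - η₂‖ * ‖v₁ - v₂‖ :=
  friction_functional_finite_and_four_term_estimate_general μ r L_r hrmeas hr02 hLr hrlip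
end

section
/- Let (X, μ) be a measure space and r : X × ℝ → ℝ a function such that r(x,s) ≥ 0 for all (x,s), x ↦ r(x,s) is measurable for each s ∈ ℝ, x ↦ r(x,0) belongs to L²(μ), and there is L_r > 0 with |r(x,s₁) − r(x,s₂)| ≤ L_r|s₁ − s₂| for all x, s₁, s₂. Fix η ∈ L²(μ; ℝ) and define J : L²(μ; ℝ) → ℝ by J(v) = ∫_X r(x, |η(x)|) |v(x)| dμ(x). Then J is a continuous seminorm on L²(μ; ℝ): J(v + w) ≤ J(v) + J(w), J(λv) = |λ| J(v) for all v, w ∈ L²(μ; ℝ) and λ ∈ ℝ, and J is continuous (in particular convex and lower semicontinuous) on L²(μ; ℝ). -/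
/-!
The weight `x ↦ r (x, |η x|)` lies in `L²`: it is measurable because `r` is a Carathéodory
function, and the Lipschitz bound gives the growth `|r (x, s)| ≤ |r (x, 0)| + L_r |s|`.
For a weight `0 ≤ g ∈ L²`, the map `v ↦ ⟪g, |v|⟫` is a seminorm (the lattice triangle inequality
`|v + w| ≤ |v| + |w|` is preserved by pairing with `g ≥ 0`), and it is dominated by `‖g‖ ‖v‖`
by Cauchy–Schwarz, hence continuous; `J` is this seminorm.
-/

open MeasureTheory

section Superposition

variable {X : Type*} [MeasurableSpace X] {μ : Measure X}

theorem aemeasurable_caratheodory_comp {ι β : Type*} [TopologicalSpace ι]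
    [TopologicalSpace.MetrizableSpace ι] [MeasurableSpace ι] [SecondCountableTopology ι]
    [OpensMeasurableSpace ι] [MeasurableSpace β] [TopologicalSpace β]
    [TopologicalSpace.PseudoMetrizableSpace β] [BorelSpace β] {r : X × ι → β}
    (hrcont : ∀ x, Continuous fun s => r (x, s)) (hrmeas : ∀ s, Measurable fun x => r (x, s))
    {f : X → ι} (hf : AEMeasurable f μ) : AEMeasurable (fun x => r (x, f x)) μ :=
  (measurable_uncurry_of_continuous_of_measurable (u := fun s x => r (x, s)) hrcont
    hrmeas).comp_aemeasurable (hf.prodMk aemeasurable_id)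

theorem memLp_superposition_of_lipschitz {p : ENNReal} {r : X × ℝ → ℝ} {L : ℝ}
    (hrmeas : ∀ s, Measurable fun x => r (x, s)) (hr_zero : MemLp (fun x => r (x, 0)) p μ)
    (hrlip : ∀ x s₁ s₂, |r (x, s₁) - r (x, s₂)| ≤ L * |s₁ - s₂|)
    {f : X → ℝ} (hf : MemLp f p μ) : MemLp (fun x => r (x, f x)) p μ := by
  have hrcont (x : X) : Continuous fun s => r (x, s) :=
    (LipschitzWith.of_dist_le' fun s₁ s₂ => hrlip x s₁ s₂).continuous
  have hbound : MemLp (fun x => |r (x, 0)| + |L| * |f x|) p μ :=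
    hr_zero.abs.add (hf.abs.const_mul |L|)
  refine hbound.of_le (aemeasurable_caratheodory_comp hrcont hrmeas
    hf.aestronglyMeasurable.aemeasurable).aestronglyMeasurable (ae_of_all _ fun x => ?_)
  have hgrowth : |r (x, f x)| ≤ |r (x, 0)| + |L| * |f x| := by
    have hlip_zero := hrlip x (f x) 0
    rw [sub_zero] at hlip_zero
    have hL : L * |f x| ≤ |L| * |f x| := by gcongr; exact le_abs_self L
    linarith [abs_sub_abs_le_abs_sub (r (x, f x)) (r (x, 0))]
  simpa only [Real.norm_eq_abs, abs_of_nonneg (by positivity : 0 ≤ |r (x, 0)| + |L| * |f x|)]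
    using hgrowth

end Superposition

theorem MeasureTheory.Lp.abs_smul {X : Type*} [MeasurableSpace X] {μ : Measure X}
    {p : ENNReal} (c : ℝ) (v : Lp ℝ p μ) : |c • v| = |c| • |v| := by
  refine Lp.ext ?_
  filter_upwards [Lp.coeFn_abs (c • v), Lp.coeFn_smul c v, Lp.coeFn_smul |c| |v|,
    Lp.coeFn_abs v] with x h₁ h₂ h₃ h₄
  simp only [h₁, h₂, h₃, h₄, Pi.smul_apply, smul_eq_mul, abs_mul]

namespace MeasureTheory.L2

variable {X : Type*} [MeasurableSpace X] {μ : Measure X}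

theorem real_inner_nonneg {f g : Lp ℝ 2 μ} (hf : 0 ≤ f) (hg : 0 ≤ g) :
    0 ≤ @inner ℝ _ _ f g := by
  rw [inner_def]
  refine integral_nonneg_of_ae ?_
  filter_upwards [(Lp.coeFn_nonneg f).2 hf, (Lp.coeFn_nonneg g).2 hg] with x hfx hgx
  exact mul_nonneg hgx hfx

theorem real_inner_mono_right {g : Lp ℝ 2 μ} (hg : 0 ≤ g) {v w : Lp ℝ 2 μ} (hvw : v ≤ w) :
    @inner ℝ _ _ g v ≤ @inner ℝ _ _ g w := by
  rw [← sub_nonneg, ← inner_sub_right]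
  exact real_inner_nonneg hg (sub_nonneg.2 hvw)

theorem real_inner_abs_eq_integral {g : Lp ℝ 2 μ} {G : X → ℝ} (hgG : g =ᵐ[μ] G)
    (v : Lp ℝ 2 μ) : @inner ℝ _ _ g |v| = ∫ x, G x * |v x| ∂μ := by
  rw [inner_def]
  refine integral_congr_ae ?_
  filter_upwards [hgG, Lp.coeFn_abs v] with x h₁ h₂
  rw [RCLike.inner_apply, h₁, h₂, conj_trivial, mul_comm]

noncomputable def weightedL1Seminorm (g : Lp ℝ 2 μ) (hg : 0 ≤ g) : Seminorm ℝ (Lp ℝ 2 μ) where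
  toFun v := @inner ℝ _ _ g |v|
  map_zero' := by simp
  add_le' v w := by
    rw [← inner_add_right]
    exact real_inner_mono_right hg (abs_add_le v w)
  neg' v := by rw [abs_neg]
  smul' c v := by rw [Lp.abs_smul, inner_smul_right, Real.norm_eq_abs]

theorem weightedL1Seminorm_apply {g : Lp ℝ 2 μ} (hg : 0 ≤ g) (v : Lp ℝ 2 μ) :
    weightedL1Seminorm g hg v = @inner ℝ _ _ g |v| := rfl

theorem weightedL1Seminorm_le {g : Lp ℝ 2 μ} (hg : 0 ≤ g) :
    weightedL1Seminorm g hg ≤ ‖g‖₊ • normSeminorm ℝ (Lp ℝ 2 μ) := fun v => by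
  calc weightedL1Seminorm g hg v ≤ ‖g‖ * ‖|v|‖ := real_inner_le_norm g |v|
    _ = (‖g‖₊ • normSeminorm ℝ (Lp ℝ 2 μ)) v := by simp [norm_abs_eq_norm, NNReal.smul_def]

theorem continuous_weightedL1Seminorm {g : Lp ℝ 2 μ} (hg : 0 ≤ g) :
    Continuous (weightedL1Seminorm g hg) :=
  Seminorm.continuous_of_le
    (by simpa [NNReal.smul_def] using continuous_norm.const_smul (‖g‖₊ : ℝ))
    (weightedL1Seminorm_le hg)

end MeasureTheory.L2

open MeasureTheory.L2 in
theorem friction_functional_is_continuous_seminorm_general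
    {X : Type*} [MeasurableSpace X] (μ : Measure X)
    (r : X × ℝ → ℝ) (L_r : ℝ)
    (hr0 : ∀ x s, 0 ≤ r (x, s))
    (hrmeas : ∀ s : ℝ, Measurable fun x => r (x, s))
    (hr02 : MemLp (fun x => r (x, 0)) 2 μ)
    (hrlip : ∀ x s₁ s₂, |r (x, s₁) - r (x, s₂)| ≤ L_r * |s₁ - s₂|)
    (η : Lp ℝ 2 μ) (J : Lp ℝ 2 μ → ℝ)
    (hJ : ∀ v : Lp ℝ 2 μ, J v = ∫ x, r (x, |η x|) * |v x| ∂μ) :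
    (∀ v w : Lp ℝ 2 μ, J (v + w) ≤ J v + J w) ∧
    (∀ (c : ℝ) (v : Lp ℝ 2 μ), J (c • v) = |c| * J v) ∧
    Continuous J ∧
    ConvexOn ℝ Set.univ J ∧
    LowerSemicontinuous J := by
  have hweight : MemLp (fun x => r (x, |η x|)) 2 μ :=
    memLp_superposition_of_lipschitz hrmeas hr02 hrlip (Lp.memLp η).abs
  set g := hweight.toLp _
  have hg : 0 ≤ g := (Lp.coeFn_nonneg g).1 <| by
    filter_upwards [hweight.coeFn_toLp] with x hx
    rw [Pi.zero_apply, hx]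
    exact hr0 x _
  obtain rfl : J = weightedL1Seminorm g hg := funext fun v => by
    rw [hJ, weightedL1Seminorm_apply, real_inner_abs_eq_integral hweight.coeFn_toLp]
  have hcont := continuous_weightedL1Seminorm hg
  exact ⟨map_add_le_add _, fun c v => by rw [map_smul_eq_mul, Real.norm_eq_abs], hcont,
    Seminorm.convexOn _, hcont.lowerSemicontinuous⟩

/-- For fixed `η ∈ L²(μ)`, the functional `J(v) = ∫ r(x,|η x|) |v x| dμ` is a
continuous seminorm on `L²(μ)`: it is subadditive, absolutely homogeneous and
continuous (in particular convex and lower semicontinuous). -/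
theorem friction_functional_is_continuous_seminorm
    {X : Type*} [MeasurableSpace X] (μ : Measure X)
    (r : X × ℝ → ℝ) (L_r : ℝ)
    (hr0 : ∀ x s, 0 ≤ r (x, s))
    (hrmeas : ∀ s : ℝ, Measurable fun x => r (x, s))
    (hr02 : MemLp (fun x => r (x, 0)) 2 μ)
    (hLr : 0 < L_r)
    (hrlip : ∀ x s₁ s₂, |r (x, s₁) - r (x, s₂)| ≤ L_r * |s₁ - s₂|)
    (η : Lp ℝ 2 μ) (J : Lp ℝ 2 μ → ℝ)
    (hJ : ∀ v : Lp ℝ 2 μ, J v = ∫ x, r (x, |η x|) * |v x| ∂μ) :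
    (∀ v w : Lp ℝ 2 μ, J (v + w) ≤ J v + J w) ∧
    (∀ (c : ℝ) (v : Lp ℝ 2 μ), J (c • v) = |c| * J v) ∧
    Continuous J ∧
    ConvexOn ℝ Set.univ J ∧
    LowerSemicontinuous J :=
  friction_functional_is_continuous_seminorm_general μ r L_r hr0 hrmeas hr02 hrlip η J hJ
end

section
/- Let V and H be real Hilbert spaces and T > 0. Let A : H → H be a bounded linear operator with ⟨Aτ, τ⟩ ≥ m‖τ‖² for all τ ∈ H (some m > 0), and let G : V → H be Lipschitz continuous with constant L_G. Let P : [0,T] → H be continuous, θ₀ ∈ H, and let u₁, u₂ ∈ C¹([0,T];V). Suppose θ₁, θ₂ ∈ C¹([0,T];H) satisfy θᵢ(0) = θ₀ and θ̇ᵢ(t) + Aθᵢ(t) = G(u̇ᵢ(t)) + P(t) for all t ∈ [0,T] (i = 1, 2). Then there exists a constant c > 0 depending only on L_G and m (one may take c = L_G²/(2m)) such that for every t ∈ [0,T]: ‖θ₁(t) − θ₂(t)‖² ≤ c ∫₀ᵗ ‖u̇₁(s) − u̇₂(s)‖² ds. -/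
open MeasureTheory Set
open scoped RealInnerProductSpace

/-- Continuous dependence of the temperature on the velocity: if `θ₁, θ₂` solve the
abstract heat evolution equation with velocities `u̇₁, u̇₂` and the same initial
value, then there is a constant `c > 0` (depending only on the Lipschitz constant
`L_G` of `G` and the monotonicity constant `m` of `A`; one may take
`c = L_G²/(2m)`) with `‖θ₁(t) − θ₂(t)‖² ≤ c ∫₀ᵗ ‖u̇₁(s) − u̇₂(s)‖² ds`. -/
theorem heat_evolution_continuous_dependence
    {V : Type*} [NormedAddCommGroup V] [InnerProductSpace ℝ V] [CompleteSpace V]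
    {H : Type*} [NormedAddCommGroup H] [InnerProductSpace ℝ H] [CompleteSpace H]
    (T m L_G : ℝ) (hT : 0 < T)
    (A : H →L[ℝ] H) (hm : 0 < m) (hA : ∀ τ : H, m * ‖τ‖ ^ 2 ≤ ⟪A τ, τ⟫)
    (G : V → H) (hLG : 0 ≤ L_G) (hG : ∀ v w : V, ‖G v - G w‖ ≤ L_G * ‖v - w‖)
    (P : ℝ → H) (hP : ContinuousOn P (Icc (0 : ℝ) T))
    (θ₀ : H) (u₁ u₁' u₂ u₂' : ℝ → V) (θ₁ θ₁' θ₂ θ₂' : ℝ → H)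
    (hu₁ : ∀ t ∈ Icc (0 : ℝ) T, HasDerivWithinAt u₁ (u₁' t) (Icc (0 : ℝ) T) t)
    (hu₁' : ContinuousOn u₁' (Icc (0 : ℝ) T))
    (hu₂ : ∀ t ∈ Icc (0 : ℝ) T, HasDerivWithinAt u₂ (u₂' t) (Icc (0 : ℝ) T) t)
    (hu₂' : ContinuousOn u₂' (Icc (0 : ℝ) T))
    (hθ₁ : ∀ t ∈ Icc (0 : ℝ) T, HasDerivWithinAt θ₁ (θ₁' t) (Icc (0 : ℝ) T) t)
    (hθ₁' : ContinuousOn θ₁' (Icc (0 : ℝ) T))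
    (hθ₂ : ∀ t ∈ Icc (0 : ℝ) T, HasDerivWithinAt θ₂ (θ₂' t) (Icc (0 : ℝ) T) t)
    (hθ₂' : ContinuousOn θ₂' (Icc (0 : ℝ) T))
    (hinit₁ : θ₁ 0 = θ₀) (hinit₂ : θ₂ 0 = θ₀)
    (heq₁ : ∀ t ∈ Icc (0 : ℝ) T, θ₁' t + A (θ₁ t) = G (u₁' t) + P t)
    (heq₂ : ∀ t ∈ Icc (0 : ℝ) T, θ₂' t + A (θ₂ t) = G (u₂' t) + P t) :
    ∃ c : ℝ, 0 < c ∧ ∀ t ∈ Icc (0 : ℝ) T,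
      ‖θ₁ t - θ₂ t‖ ^ 2 ≤ c * ∫ s in (0 : ℝ)..t, ‖u₁' s - u₂' s‖ ^ 2 := by
  set c₀ : ℝ := L_G ^ 2 / (2 * m) with hc₀
  have hc₀nn : 0 ≤ c₀ := by positivity
  refine ⟨c₀ + 1, by positivity, ?_⟩
  intro t ht
  obtain ⟨ht0, htT⟩ := ht
  set w : ℝ → H := fun s => θ₁ s - θ₂ s with hwdef
  set w' : ℝ → H := fun s => θ₁' s - θ₂' s with hw'def
  have hwderiv : ∀ s ∈ Icc (0:ℝ) T, HasDerivWithinAt w (w' s) (Icc (0:ℝ) T) s :=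
    fun s hs => (hθ₁ s hs).sub (hθ₂ s hs)
  have hwcont : ContinuousOn w (Icc (0:ℝ) T) :=
    fun s hs => ((hwderiv s hs).continuousWithinAt)
  have hw'cont : ContinuousOn w' (Icc (0:ℝ) T) := hθ₁'.sub hθ₂'
  set f : ℝ → ℝ := fun s => ⟪w s, w s⟫ with hfdef
  set f' : ℝ → ℝ := fun s => ⟪w s, w' s⟫ + ⟪w' s, w s⟫ with hf'def
  set g : ℝ → ℝ := fun s => ‖u₁' s - u₂' s‖ ^ 2 with hgdef
  have hgcont : ContinuousOn g (Icc (0:ℝ) T) := by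
    have := (hu₁'.sub hu₂').norm
    exact this.pow 2
  have hfderiv : ∀ s ∈ Icc (0:ℝ) T, HasDerivWithinAt f (f' s) (Icc (0:ℝ) T) s :=
    fun s hs => (hwderiv s hs).inner ℝ (hwderiv s hs)
  have hfcont : ContinuousOn f (Icc (0:ℝ) T) := hwcont.inner hwcont
  have hf'cont : ContinuousOn f' (Icc (0:ℝ) T) :=
    (hwcont.inner hw'cont).add (hw'cont.inner hwcont)
  -- key pointwise bound
  have hkey : ∀ s ∈ Icc (0:ℝ) T, f' s ≤ c₀ * g s := by
    intro s hs
    have hw'eq : w' s = (G (u₁' s) - G (u₂' s)) - A (w s) := by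
      have h1 := heq₁ s hs
      have h2 := heq₂ s hs
      simp only [hwdef, hw'def, map_sub]
      abel_nf
      have : θ₁' s = G (u₁' s) + P s - A (θ₁ s) := by
        rw [← h1]; abel
      have h2' : θ₂' s = G (u₂' s) + P s - A (θ₂ s) := by
        rw [← h2]; abel
      rw [this, h2']; abel
    have hbound : ⟪w' s, w s⟫ ≤ L_G * ‖u₁' s - u₂' s‖ * ‖w s‖ - m * ‖w s‖ ^ 2 := by
      rw [hw'eq, inner_sub_left]
      have h1 : ⟪G (u₁' s) - G (u₂' s), w s⟫ ≤ L_G * ‖u₁' s - u₂' s‖ * ‖w s‖ := by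
        calc ⟪G (u₁' s) - G (u₂' s), w s⟫ ≤ ‖G (u₁' s) - G (u₂' s)‖ * ‖w s‖ :=
              real_inner_le_norm _ _
          _ ≤ L_G * ‖u₁' s - u₂' s‖ * ‖w s‖ := by
              gcongr; exact hG _ _
      have h2 := hA (w s)
      linarith
    have hsym : ⟪w s, w' s⟫ = ⟪w' s, w s⟫ := real_inner_comm _ _
    have hgnn : (0:ℝ) ≤ ‖u₁' s - u₂' s‖ := norm_nonneg _
    have hwnn : (0:ℝ) ≤ ‖w s‖ := norm_nonneg _
    simp only [hf'def, hsym, hgdef]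
    have key : 2 * (L_G * ‖u₁' s - u₂' s‖ * ‖w s‖ - m * ‖w s‖ ^ 2)
        ≤ L_G ^ 2 / (2 * m) * ‖u₁' s - u₂' s‖ ^ 2 := by
      rw [div_mul_eq_mul_div, le_div_iff₀ (by positivity)]
      nlinarith [sq_nonneg (L_G * ‖u₁' s - u₂' s‖ - 2 * m * ‖w s‖)]
    linarith
  -- FTC
  have hsub : Icc (0:ℝ) t ⊆ Icc (0:ℝ) T := Icc_subset_Icc_right htT
  have hf'int : IntervalIntegrable f' volume 0 t :=
    (hf'cont.mono hsub).intervalIntegrable_of_Icc ht0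
  have hgint : IntervalIntegrable (fun s => c₀ * g s) volume 0 t :=
    (((hgcont.mono hsub)).const_smul c₀).intervalIntegrable_of_Icc ht0
  have hftc : ∫ s in (0:ℝ)..t, f' s = f t - f 0 := by
    apply intervalIntegral.integral_eq_sub_of_hasDeriv_right_of_le ht0
      (hfcont.mono hsub) ?_ hf'int
    intro x hx
    have hxI : x ∈ Icc (0:ℝ) T := ⟨hx.1.le, hx.2.le.trans htT⟩
    have : HasDerivAt f (f' x) x :=
      (hfderiv x hxI).hasDerivAt (Icc_mem_nhds hx.1 (lt_of_lt_of_le hx.2 htT))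
    exact this.hasDerivWithinAt
  have hf0 : f 0 = 0 := by
    simp [hfdef, hwdef, hinit₁, hinit₂]
  have hmono : ∫ s in (0:ℝ)..t, f' s ≤ ∫ s in (0:ℝ)..t, c₀ * g s :=
    intervalIntegral.integral_mono_on ht0 hf'int hgint
      (fun x hx => hkey x (hsub hx))
  have hginteg_nn : 0 ≤ ∫ s in (0:ℝ)..t, g s := by
    apply intervalIntegral.integral_nonneg ht0
    intro x hx
    positivity
  have hfle : f t ≤ c₀ * ∫ s in (0:ℝ)..t, g s := by
    rw [← intervalIntegral.integral_const_mul]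
    linarith [hftc, hmono, hf0]
  have hft : ‖θ₁ t - θ₂ t‖ ^ 2 = f t := (real_inner_self_eq_norm_sq _).symm
  rw [hft]
  calc f t ≤ c₀ * ∫ s in (0:ℝ)..t, g s := hfle
    _ ≤ (c₀ + 1) * ∫ s in (0:ℝ)..t, g s := by nlinarith
end
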